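/- Let d ≥ 1, t > 0, and M, L_h, L_h', B, G, L_g ≥ 0. Let h : ℝ × EuclideanSpace ℝ (Fin d) → ℝ and Dh : ℝ × EuclideanSpace ℝ (Fin d) → EuclideanSpace ℝ (Fin d) be such that for all s ∈ [0,t]: (i) 0 ≤ h(s,x) ≤ M for all x; (ii) x ↦ h(s,x) is Lipschitz with constant L_h; (iii) ‖Dh(s,x)‖ ≤ L_h for all x; (iv) x ↦ Dh(s,x) is Lipschitz with constant L_h'; and assume s ↦ h(s,x) and s ↦ Dh(s,x) are continuous for each x. Let c₀ : EuclideanSpace ℝ (Fin d) → ℝ and ∇c₀ : EuclideanSpace ℝ (Fin d) → EuclideanSpace ℝ (Fin d) satisfy |c₀(x)| ≤ B, ‖∇c₀(x)‖ ≤ G, c₀ Lipschitz with constant G, and ∇c₀ Lipschitz with constant L_g. Then the map b : EuclideanSpace ℝ (Fin d) → EuclideanSpace ℝ (Fin d) defined by b(x) = exp(−∫₀ᵗ h(s,x) ds) · ( ∇c₀(x) − c₀(x) · ∫₀ᵗ Dh(s,x) ds ) is Lipschitz on EuclideanSpace ℝ (Fin d) with some constant depending only on t, M, L_h, L_h', B,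 G, L_g. -/
import Mathlib


open MeasureTheory intervalIntegral

private lemma exp_neg_lip {a b : ℝ} (ha : 0 ≤ a) (hb : 0 ≤ b) :
    |Real.exp (-a) - Real.exp (-b)| ≤ |a - b| := by
  wlog hab : a ≤ b generalizing a b
  · rw [abs_sub_comm, abs_sub_comm a b]; exact this hb ha (le_of_not_ge hab)
  have h1 : Real.exp (-b) ≤ Real.exp (-a) := Real.exp_le_exp.2 (by linarith)
  have h2 : Real.exp (-a) ≤ 1 := Real.exp_le_one_iff.2 (by linarith)
  rw [abs_of_nonneg (by linarith), abs_of_nonpos (by linarith)]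
  have key : Real.exp (-b) = Real.exp (-a) * Real.exp (a - b) := by
    rw [← Real.exp_add]; ring_nf
  have h3 : a - b + 1 ≤ Real.exp (a - b) := Real.add_one_le_exp (a - b)
  have h4 : Real.exp (a - b) ≤ 1 := Real.exp_le_one_iff.2 (by linarith)
  have h5 : 0 < Real.exp (-a) := Real.exp_pos _
  nlinarith

/-- Lipschitz property of the regularized PHKS drift
`b x = exp (−∫₀ᵗ h (s, x) ds) • (∇c₀ x − c₀ x • ∫₀ᵗ Dh (s, x) ds)`, with a Lipschitz
constant depending only on `t, M, Lh, Lh', B, G, Lg` (and not on `h`, `Dh`, `c₀`, `∇c₀`). -/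
theorem stmt_15 (d : ℕ) (hd : 1 ≤ d) (t M Lh Lh' B G Lg : ℝ) (ht : 0 < t)
    (hM : 0 ≤ M) (hLh : 0 ≤ Lh) (hLh' : 0 ≤ Lh') (hB : 0 ≤ B) (hG : 0 ≤ G)
    (hLg : 0 ≤ Lg) :
    ∃ C : ℝ, ∀ (h : ℝ × EuclideanSpace ℝ (Fin d) → ℝ)
      (Dh : ℝ × EuclideanSpace ℝ (Fin d) → EuclideanSpace ℝ (Fin d))
      (c₀ : EuclideanSpace ℝ (Fin d) → ℝ)
      (gc₀ : EuclideanSpace ℝ (Fin d) → EuclideanSpace ℝ (Fin d)),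
      (∀ s ∈ Set.Icc (0 : ℝ) t, ∀ x, 0 ≤ h (s, x) ∧ h (s, x) ≤ M) →
      (∀ s ∈ Set.Icc (0 : ℝ) t, ∀ x y, |h (s, x) - h (s, y)| ≤ Lh * ‖x - y‖) →
      (∀ s ∈ Set.Icc (0 : ℝ) t, ∀ x, ‖Dh (s, x)‖ ≤ Lh) →
      (∀ s ∈ Set.Icc (0 : ℝ) t, ∀ x y, ‖Dh (s, x) - Dh (s, y)‖ ≤ Lh' * ‖x - y‖) →
      (∀ x, Continuous fun s => h (s, x)) →
      (∀ x, Continuous fun s => Dh (s, x)) →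
      (∀ x, |c₀ x| ≤ B) →
      (∀ x, ‖gc₀ x‖ ≤ G) →
      (∀ x y, |c₀ x - c₀ y| ≤ G * ‖x - y‖) →
      (∀ x y, ‖gc₀ x - gc₀ y‖ ≤ Lg * ‖x - y‖) →
      ∀ x y : EuclideanSpace ℝ (Fin d),
        ‖(Real.exp (-∫ s in (0:ℝ)..t, h (s, x)) •
            (gc₀ x - c₀ x • ∫ s in (0:ℝ)..t, Dh (s, x))) -
          (Real.exp (-∫ s in (0:ℝ)..t, h (s, y)) •
            (gc₀ y - c₀ y • ∫ s in (0:ℝ)..t, Dh (s, y)))‖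
          ≤ C * ‖x - y‖ := by
  refine ⟨Lh * t * (G + B * (Lh * t)) + (Lg + G * (Lh * t) + B * (Lh' * t)), ?_⟩
  intro h Dh c₀ gc₀ hpos hlip hDb hDlip hcont hDcont hc₀B hgG hcLip hgLip x y
  set Ih : EuclideanSpace ℝ (Fin d) → ℝ := fun z => ∫ s in (0:ℝ)..t, h (s, z) with hIh
  set ID : EuclideanSpace ℝ (Fin d) → EuclideanSpace ℝ (Fin d) :=
    fun z => ∫ s in (0:ℝ)..t, Dh (s, z) with hID
  have hsub : Set.uIoc (0:ℝ) t ⊆ Set.Icc 0 t := by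
    rw [Set.uIoc_of_le ht.le]; exact Set.Ioc_subset_Icc_self
  have hint : ∀ z, IntervalIntegrable (fun s => h (s, z)) volume 0 t :=
    fun z => (hcont z).intervalIntegrable 0 t
  have hDint : ∀ z, IntervalIntegrable (fun s => Dh (s, z)) volume 0 t :=
    fun z => (hDcont z).intervalIntegrable 0 t
  have hIh_nonneg : ∀ z, 0 ≤ Ih z := fun z =>
    intervalIntegral.integral_nonneg ht.le (fun s hs => (hpos s hs z).1)
  have hexp_le : ∀ z, Real.exp (-(Ih z)) ≤ 1 := fun z =>
    Real.exp_le_one_iff.2 (by linarith [hIh_nonneg z])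
  -- Lipschitz of Ih
  have hIh_lip : |Ih x - Ih y| ≤ Lh * ‖x - y‖ * t := by
    rw [hIh]
    rw [← intervalIntegral.integral_sub (hint x) (hint y)]
    have := intervalIntegral.norm_integral_le_of_norm_le_const
      (a := (0:ℝ)) (b := t) (C := Lh * ‖x - y‖)
      (f := fun s => h (s, x) - h (s, y))
      (fun s hs => by simpa using hlip s (hsub hs) x y)
    simpa [abs_of_nonneg ht.le] using this
  -- bound on ID
  have hID_bound : ∀ z, ‖ID z‖ ≤ Lh * t := fun z => by
    have := intervalIntegral.norm_integral_le_of_norm_le_const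
      (a := (0:ℝ)) (b := t) (C := Lh)
      (f := fun s => Dh (s, z))
      (fun s hs => hDb s (hsub hs) z)
    simpa [hID, abs_of_nonneg ht.le] using this
  have hID_lip : ‖ID x - ID y‖ ≤ Lh' * ‖x - y‖ * t := by
    rw [hID]
    rw [← intervalIntegral.integral_sub (hDint x) (hDint y)]
    have := intervalIntegral.norm_integral_le_of_norm_le_const
      (a := (0:ℝ)) (b := t) (C := Lh' * ‖x - y‖)
      (f := fun s => Dh (s, x) - Dh (s, y))
      (fun s hs => hDlip s (hsub hs) x y)
    simpa [abs_of_nonneg ht.le] using this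
  have hexp_lip : |Real.exp (-(Ih x)) - Real.exp (-(Ih y))| ≤ Lh * ‖x - y‖ * t :=
    le_trans (exp_neg_lip (hIh_nonneg x) (hIh_nonneg y)) hIh_lip
  set Ex := Real.exp (-(Ih x)) with hEx
  set Ey := Real.exp (-(Ih y)) with hEy
  set Fx := gc₀ x - c₀ x • ID x with hFx
  set Fy := gc₀ y - c₀ y • ID y with hFy
  have hFx_bound : ‖Fx‖ ≤ G + B * (Lh * t) := by
    calc ‖Fx‖ ≤ ‖gc₀ x‖ + ‖c₀ x • ID x‖ := norm_sub_le _ _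
    _ ≤ G + B * (Lh * t) := by
        rw [norm_smul]
        exact add_le_add (hgG x)
          (mul_le_mul (by simpa [Real.norm_eq_abs] using hc₀B x) (hID_bound x)
            (norm_nonneg _) hB)
  have hF_lip : ‖Fx - Fy‖ ≤ (Lg + G * (Lh * t) + B * (Lh' * t)) * ‖x - y‖ := by
    have key : Fx - Fy = (gc₀ x - gc₀ y) - ((c₀ x - c₀ y) • ID x + c₀ y • (ID x - ID y)) := by
      rw [hFx, hFy]; module
    rw [key]
    calc ‖(gc₀ x - gc₀ y) - ((c₀ x - c₀ y) • ID x + c₀ y • (ID x - ID y))‖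
        ≤ ‖gc₀ x - gc₀ y‖ + (‖(c₀ x - c₀ y) • ID x‖ + ‖c₀ y • (ID x - ID y)‖) :=
          le_trans (norm_sub_le _ _) (by gcongr; exact norm_add_le _ _)
      _ ≤ Lg * ‖x - y‖ + ((G * ‖x - y‖) * (Lh * t) + B * (Lh' * ‖x - y‖ * t)) := by
          rw [norm_smul, norm_smul]
          exact add_le_add (hgLip x y)
            (add_le_add
              (mul_le_mul (by simpa [Real.norm_eq_abs] using hcLip x y) (hID_bound x)
                (norm_nonneg _) (by positivity))
              (mul_le_mul (by simpa [Real.norm_eq_abs] using hc₀B y) hID_lip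
                (norm_nonneg _) hB))
      _ = (Lg + G * (Lh * t) + B * (Lh' * t)) * ‖x - y‖ := by ring
  have hsplit : Ex • Fx - Ey • Fy = (Ex - Ey) • Fx + Ey • (Fx - Fy) := by module
  have hnn : (0:ℝ) ≤ ‖x - y‖ := norm_nonneg _
  calc ‖Ex • Fx - Ey • Fy‖ ≤ ‖(Ex - Ey) • Fx‖ + ‖Ey • (Fx - Fy)‖ := by
        rw [hsplit]; exact norm_add_le _ _
    _ = |Ex - Ey| * ‖Fx‖ + |Ey| * ‖Fx - Fy‖ := by rw [norm_smul, norm_smul]; rfl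
    _ ≤ (Lh * ‖x - y‖ * t) * (G + B * (Lh * t)) +
        1 * ((Lg + G * (Lh * t) + B * (Lh' * t)) * ‖x - y‖) := by
        exact add_le_add
          (mul_le_mul hexp_lip hFx_bound (norm_nonneg _) (by positivity))
          (mul_le_mul (by rw [abs_of_pos (Real.exp_pos _)]; exact hexp_le y) hF_lip
            (norm_nonneg _) one_pos.le)
    _ = (Lh * t * (G + B * (Lh * t)) + (Lg + G * (Lh * t) + B * (Lh' * t))) * ‖x - y‖ := by
        ring
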